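/- arXiv:2506.21110 — 3 statements merged into one kernel-verified Lean document; each statement's English description precedes it below -/
import Mathlib

section
/- Let e_i, μ_i, ŷ_i be real numbers with ŷ_i ≠ 0, x_{ik} real numbers, λ_{ih} ≥ 0 and η_{ik} ≥ 0 for i,h = 1,...,n and a fixed k. If (i) e_i = μ_i for all i, (ii) μ_i x_{ik} / ŷ_i = Σ_h λ_{ih} x_{ik} − Σ_h λ_{hi} x_{hk} − η_{ik} for all i, and (iii) η_{jk} > 0 for some j, then Σ_i e_i x_{ik} / ŷ_i < 0. -/
theorem orthogonality_fails_monotonic_multiplicative (n : ℕ) (e μ yhat : Fin n → ℝ)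
    (x : Fin n → ℝ) (lam : Fin n → Fin n → ℝ) (η : Fin n → ℝ)
    (hy : ∀ i, yhat i ≠ 0)
    (hlam : ∀ i h, 0 ≤ lam i h)
    (hη : ∀ i, 0 ≤ η i)
    (h1 : ∀ i, e i = μ i)
    (h2 : ∀ i, μ i * x i / yhat i = (∑ h, lam i h * x i) - (∑ h, lam h i * x h) - η i)
    (h3 : ∃ j, 0 < η j) :
    ∑ i, e i * x i / yhat i < 0 := by
  have key : ∑ i, e i * x i / yhat i = -∑ i, η i := by
    calc ∑ i, e i * x i / yhat i
        = ∑ i, ((∑ h, lam i h * x i) - (∑ h, lam h i * x h) - η i) := by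
          refine Finset.sum_congr rfl fun i _ => ?_
          rw [h1 i, h2 i]
      _ = (∑ i, ∑ h, lam i h * x i) - (∑ i, ∑ h, lam h i * x h) - ∑ i, η i := by
          simp [Finset.sum_sub_distrib]
      _ = -∑ i, η i := by rw [Finset.sum_comm (f := fun i h => lam h i * x h)]; ring
  rw [key, neg_neg_iff_pos]
  obtain ⟨j, hj⟩ := h3
  exact Finset.sum_pos' (fun i _ => hη i) ⟨j, Finset.mem_univ j, hj⟩
end

section
/- Let e_i, μ_i ∈ ℝ, λ_{ih} ≥ 0, η_{ik} ≥ 0 satisfy: e_i = μ_i for all i; for a fixed k, μ_i x_{ik} = Σ_h λ_{ih} x_{ik} − Σ_h λ_{hi} x_{hk} − η_{ik} for all i. Then Σ_i e_i x_{ik} = −Σ_i η_{ik} ≤ 0, with equality if and only if η_{ik} = 0 for all i. -/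
theorem orthogonality_shadow_price_additive (n : ℕ) (e μ : Fin n → ℝ)
    (lam : Fin n → Fin n → ℝ) (η : Fin n → ℝ) (x : Fin n → ℝ)
    (hlam : ∀ i h, 0 ≤ lam i h)
    (hη : ∀ i, 0 ≤ η i)
    (h1 : ∀ i, e i = μ i)
    (h2 : ∀ i, μ i * x i = (∑ h, lam i h * x i) - (∑ h, lam h i * x h) - η i) :
    (∑ i, e i * x i = -∑ i, η i) ∧ (∑ i, e i * x i ≤ 0) ∧
      (∑ i, e i * x i = 0 ↔ ∀ i, η i = 0) := by
  have key : ∑ i, e i * x i = -∑ i, η i := by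
    have : ∑ i, e i * x i
        = (∑ i, ∑ h, lam i h * x i) - (∑ i, ∑ h, lam h i * x h) - ∑ i, η i := by
      simp only [h1, h2, Finset.sum_sub_distrib]
    rw [this, Finset.sum_comm (f := fun i h => lam h i * x h)]
    ring
  refine ⟨key, ?_, ?_⟩
  · rw [key]
    simp only [neg_nonpos]
    exact Finset.sum_nonneg fun i _ => hη i
  · rw [key, neg_eq_zero]
    constructor
    · intro h i
      exact (Finset.sum_eq_zero_iff_of_nonneg (fun i _ => hη i)).mp h i (Finset.mem_univ i)
    · intro h
      exact Finset.sum_eq_zero fun i _ => h i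
end

section
/- Let e_i, μ_i, ŷ_i ∈ ℝ with ŷ_i ≠ 0, and λ_{ih} ≥ 0, η_{ik} ≥ 0 satisfy: e_i = μ_i for all i; for a fixed k, μ_i x_{ik}/ŷ_i = Σ_h λ_{ih} x_{ik} − Σ_h λ_{hi} x_{hk} − η_{ik} for all i. Then Σ_i e_i x_{ik}/ŷ_i = −Σ_i η_{ik} ≤ 0, with equality if and only if all η_{ik} = 0. -/
theorem orthogonality_shadow_price_multiplicative (n : ℕ) (e μ yhat : Fin n → ℝ)
    (x : Fin n → ℝ) (lam : Fin n → Fin n → ℝ) (η : Fin n → ℝ)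
    (hy : ∀ i, yhat i ≠ 0)
    (hlam : ∀ i h, 0 ≤ lam i h)
    (hη : ∀ i, 0 ≤ η i)
    (h1 : ∀ i, e i = μ i)
    (h2 : ∀ i, μ i * x i / yhat i = (∑ h, lam i h * x i) - (∑ h, lam h i * x h) - η i) :
    (∑ i, e i * x i / yhat i = -∑ i, η i) ∧ (∑ i, e i * x i / yhat i ≤ 0) ∧
      (∑ i, e i * x i / yhat i = 0 ↔ ∀ i, η i = 0) := by
  have key : ∑ i, e i * x i / yhat i = -∑ i, η i := by
    calc ∑ i, e i * x i / yhat i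
        = ∑ i, ((∑ h, lam i h * x i) - (∑ h, lam h i * x h) - η i) := by
          refine Finset.sum_congr rfl fun i _ => ?_
          rw [h1 i, h2 i]
      _ = (∑ i, ∑ h, lam i h * x i) - (∑ i, ∑ h, lam h i * x h) - ∑ i, η i := by
          simp [Finset.sum_sub_distrib]
      _ = -∑ i, η i := by
          rw [Finset.sum_comm (f := fun i h => lam h i * x h)]
          ring
  refine ⟨key, ?_, ?_⟩
  · rw [key]
    simpa using Finset.sum_nonneg fun i _ => hη i
  · rw [key, neg_eq_zero]
    constructor
    · intro h i
      exact (Finset.sum_eq_zero_iff_of_nonneg fun i _ => hη i).mp h i (Finset.mem_univ i)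
    · intro h
      exact Finset.sum_eq_zero fun i _ => h i
end
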